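/- arXiv:0906.3896 — 7 statements merged into one kernel-verified Lean document; each statement's English description precedes it below -/
import Mathlib

section
/- Let d ≥ 1, r ≥ 0, and let C ⊆ ℝ^d be a set of centers that is centrally symmetric (c ∈ C implies −c ∈ C). Suppose some line {p + t•v : t ∈ ℝ} with v ≠ 0 intersects the closed ball of radius r around every center c ∈ C. Then the parallel line through the origin {t•v : t ∈ ℝ} also intersects the closed ball of radius r around every center c ∈ C. -/
/-! If `p + t₁ • v` lies in the ball around `c` and `p + t₂ • v` in the ball around `-c`, then
`-(p + t₂ • v)` lies in the ball around `c` as well, and so does their midpoint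
`((t₁ - t₂) / 2) • v`, in which `p` cancels. -/

theorem norm_half_smul_sub_sub_le {E : Type*} [SeminormedAddCommGroup E] [NormedSpace ℝ E]
    {x y c : E} {r : ℝ} (hx : ‖x - c‖ ≤ r) (hy : ‖y + c‖ ≤ r) :
    ‖(2⁻¹ : ℝ) • (x - y) - c‖ ≤ r :=
  calc ‖(2⁻¹ : ℝ) • (x - y) - c‖ = 2⁻¹ * ‖(x - c) - (y + c)‖ := by
        rw [show (2⁻¹ : ℝ) • (x - y) - c = (2⁻¹ : ℝ) • ((x - c) - (y + c)) by module,
          norm_smul, Real.norm_of_nonneg (by norm_num)]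
    _ ≤ 2⁻¹ * (‖x - c‖ + ‖y + c‖) := by gcongr; exact norm_sub_le _ _
    _ ≤ r := by linarith

theorem translate_stabbing_line_to_origin_general (d : ℕ) (r : ℝ)
    (C : Set (EuclideanSpace ℝ (Fin d))) (hC : ∀ c ∈ C, -c ∈ C)
    (p v : EuclideanSpace ℝ (Fin d))
    (h : ∀ c ∈ C, ∃ t : ℝ, ‖(p + t • v) - c‖ ≤ r) :
    ∀ c ∈ C, ∃ t : ℝ, ‖t • v - c‖ ≤ r := by
  intro c hc
  obtain ⟨t₁, h₁⟩ := h c hc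
  obtain ⟨t₂, h₂⟩ := h (-c) (hC c hc)
  rw [sub_neg_eq_add] at h₂
  refine ⟨(t₁ - t₂) / 2, ?_⟩
  have hmid : ((t₁ - t₂) / 2) • v = (2⁻¹ : ℝ) • ((p + t₁ • v) - (p + t₂ • v)) := by module
  rw [hmid]
  exact norm_half_smul_sub_sub_le h₁ h₂

/-- If a set of centers is centrally symmetric and some line `{p + t • v}` (with `v ≠ 0`)
intersects the closed ball of radius `r` around every center, then the parallel line
through the origin `{t • v}` does so as well. -/
theorem translate_stabbing_line_to_origin (d : ℕ) (hd : 1 ≤ d) (r : ℝ) (hr : 0 ≤ r)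
    (C : Set (EuclideanSpace ℝ (Fin d))) (hC : ∀ c ∈ C, -c ∈ C)
    (p v : EuclideanSpace ℝ (Fin d)) (hv : v ≠ 0)
    (h : ∀ c ∈ C, ∃ t : ℝ, ‖(p + t • v) - c‖ ≤ r) :
    ∀ c ∈ C, ∃ t : ℝ, ‖t • v - c‖ ≤ r :=
  translate_stabbing_line_to_origin_general d r C hC p v h
end

section
/- Let n ≥ 1 and k ≥ 1 be integers, and let F = {□_n(−i·n, 0) : 1 ≤ i ≤ 6k+1} be the family of 6k+1 open squares of side n whose lower-left corners are (−n, 0), (−2n, 0), …, (−(6k+1)n, 0). If L is a set of at most 6k axis-parallel lines that stabs F (every square of F is intersected by some line of L), then L contains a horizontal line {(x,c) : x ∈ ℝ} with 0 < c < n. -/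
/-!
The squares of the gadget lie side by side in the strip `0 < y < n` and their x-ranges are
pairwise disjoint, so a vertical line stabs at most one of them. Hence if no horizontal line
crosses the strip, the `6k + 1` squares need `6k + 1` distinct lines.
-/

/-- The vertical line `x = c`. -/
def vLine (c : ℝ) : Set (ℝ × ℝ) := {p : ℝ × ℝ | p.1 = c}

/-- The horizontal line `y = c`. -/
def hLine (c : ℝ) : Set (ℝ × ℝ) := {p : ℝ × ℝ | p.2 = c}

/-- An axis-parallel line is a vertical or a horizontal line. -/
def IsAPLine (L : Set (ℝ × ℝ)) : Prop := (∃ c, L = vLine c) ∨ (∃ c, L = hLine c)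

/-- The open axis-parallel square `□_l(x, y) = (x, x+l) × (y, y+l)`. -/
def openSquare (l x y : ℝ) : Set (ℝ × ℝ) := Set.Ioo x (x + l) ×ˢ Set.Ioo y (y + l)

open Set

lemma mem_Ioo_of_vLine_inter_openSquare_nonempty {c l x y : ℝ}
    (h : (vLine c ∩ openSquare l x y).Nonempty) : c ∈ Ioo x (x + l) := by
  obtain ⟨p, rfl : p.1 = c, hp, -⟩ := h
  exact hp

lemma mem_Ioo_of_hLine_inter_openSquare_nonempty {c l x y : ℝ}
    (h : (hLine c ∩ openSquare l x y).Nonempty) : c ∈ Ioo y (y + l) := by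
  obtain ⟨p, rfl : p.2 = c, -, hp⟩ := h
  exact hp

lemma eq_of_mem_Ioo_neg_mul {c l : ℝ} {i j : ℤ} (hi : c ∈ Ioo (-(i * l)) (-(i * l) + l))
    (hj : c ∈ Ioo (-(j * l)) (-(j * l) + l)) : i = j := by
  have hl : 0 < l := by linarith [hi.1, hi.2]
  have hji : ((j - i : ℤ) : ℝ) < 1 := by
    rw [← mul_lt_mul_iff_of_pos_right hl]
    push_cast
    linarith [hi.1, hj.2]
  have hij : ((i - j : ℤ) : ℝ) < 1 := by
    rw [← mul_lt_mul_iff_of_pos_right hl]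
    push_cast
    linarith [hj.1, hi.2]
  have : j - i < 1 := by exact_mod_cast hji
  have : i - j < 1 := by exact_mod_cast hij
  omega

lemma IsAPLine.exists_eq_hLine_of_inter_openSquare_nonempty {m : Set (ℝ × ℝ)} (hm : IsAPLine m)
    {l y : ℝ} {i j : ℤ} (hij : i ≠ j) (hi : (m ∩ openSquare l (-(i * l)) y).Nonempty)
    (hj : (m ∩ openSquare l (-(j * l)) y).Nonempty) : ∃ c ∈ Ioo y (y + l), m = hLine c := by
  rcases hm with ⟨c, rfl⟩ | ⟨c, rfl⟩
  · exact absurd (eq_of_mem_Ioo_neg_mul (mem_Ioo_of_vLine_inter_openSquare_nonempty hi)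
      (mem_Ioo_of_vLine_inter_openSquare_nonempty hj)) hij
  · exact ⟨c, mem_Ioo_of_hLine_inter_openSquare_nonempty hi, rfl⟩

theorem forcing_gadget_general (n k : ℕ)
    (L : Finset (Set (ℝ × ℝ))) (hL : ∀ l ∈ L, IsAPLine l) (hcard : L.card ≤ 6 * k)
    (hstab : ∀ i : ℕ, 1 ≤ i → i ≤ 6 * k + 1 →
      ∃ l ∈ L, (l ∩ openSquare (n : ℝ) (-((i : ℝ) * n)) 0).Nonempty) :
    ∃ c : ℝ, 0 < c ∧ c < n ∧ hLine c ∈ L := by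
  choose! f hfL hf using hstab
  obtain ⟨i, hi, j, hj, hij, hfij⟩ := Finset.exists_ne_map_eq_of_card_lt_of_maps_to
    (s := Finset.Icc 1 (6 * k + 1)) (by simp; omega)
    (fun i hi ↦ by simp only [Finset.coe_Icc, mem_Icc] at hi; exact hfL i hi.1 hi.2)
  simp only [Finset.mem_Icc] at hi hj
  have hfjL := hfL j hj.1 hj.2
  have hfi := hf i hi.1 hi.2
  rw [hfij] at hfi
  obtain ⟨c, ⟨hc0, hcn⟩, hc⟩ := (hL _ hfjL).exists_eq_hLine_of_inter_openSquare_nonempty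
    (l := n) (y := 0) (i := i) (j := j) (by exact_mod_cast hij)
    (by simpa only [Int.cast_natCast] using hfi)
    (by simpa only [Int.cast_natCast] using hf j hj.1 hj.2)
  exact ⟨c, by simpa using hc0, by simpa using hcn, hc ▸ hfjL⟩

/-- If at most `6k` axis-parallel lines stab the forcing gadget
`F_h = {□_n(−i·n, 0) : 1 ≤ i ≤ 6k+1}`, then one of them is a horizontal line
`y = c` with `0 < c < n`. -/
theorem forcing_gadget (n k : ℕ) (hn : 1 ≤ n) (hk : 1 ≤ k)
    (L : Finset (Set (ℝ × ℝ))) (hL : ∀ l ∈ L, IsAPLine l) (hcard : L.card ≤ 6 * k)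
    (hstab : ∀ i : ℕ, 1 ≤ i → i ≤ 6 * k + 1 →
      ∃ l ∈ L, (l ∩ openSquare (n : ℝ) (-((i : ℝ) * n)) 0).Nonempty) :
    ∃ c : ℝ, 0 < c ∧ c < n ∧ hLine c ∈ L :=
  forcing_gadget_general n k L hL hcard hstab
end

section
/- Let n ≥ 2 be an integer and let E ⊆ {1,…,n} × {1,…,n} be a relation. Define the family A = {□_{n−1}(i', j') : (i', j') ∈ {1,…,n}², (i', j') ∉ E} of open squares of side n−1. Let i, j ∈ {1,…,n} and let c⁻, c⁺, d⁻, d⁺ be real numbers with c⁻ ∈ (i−1, i), c⁺ ∈ (n+i−1, n+i), d⁻ ∈ (j−1, j) and d⁺ ∈ (n+j−1, n+j). Then the four lines {x = c⁻}, {x = c⁺}, {y = d⁻}, {y = d⁺} together intersect every square of A if and only if (i, j) ∈ E. -/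
open Set

theorem vLine_inter_openSquare_nonempty_iff (c l x y : ℝ) :
    (vLine c ∩ openSquare l x y).Nonempty ↔ c ∈ Ioo x (x + l) := by
  refine ⟨fun ⟨p, hp, hpx, _⟩ => hp ▸ hpx, fun hc => ?_⟩
  have hl : 0 < l := by linarith [hc.1, hc.2]
  exact ⟨(c, y + l / 2), rfl, hc, by constructor <;> linarith⟩

theorem hLine_inter_openSquare_nonempty_iff (c l x y : ℝ) :
    (hLine c ∩ openSquare l x y).Nonempty ↔ c ∈ Ioo y (y + l) := by
  refine ⟨fun ⟨p, hp, _, hpy⟩ => hp ▸ hpy, fun hc => ?_⟩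
  have hl : 0 < l := by linarith [hc.1, hc.2]
  exact ⟨(x + l / 2, c), rfl, by constructor <;> linarith, hc⟩

theorem four_lines_inter_openSquare_nonempty_iff (a b c d l x y : ℝ) :
    ((vLine a ∪ vLine b ∪ hLine c ∪ hLine d) ∩ openSquare l x y).Nonempty ↔
      a ∈ Ioo x (x + l) ∨ b ∈ Ioo x (x + l) ∨ c ∈ Ioo y (y + l) ∨ d ∈ Ioo y (y + l) := by
  simp only [union_inter_distrib_right, union_nonempty, vLine_inter_openSquare_nonempty_iff,
    hLine_inter_openSquare_nonempty_iff, or_assoc]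

section IntegerSquares

variable {n k k' : ℕ} {c : ℝ}

theorem mem_Ioo_sub_one_iff_lt (hk : k ≤ n) (hk' : 1 ≤ k') (hc : c ∈ Ioo ((k : ℝ) - 1) k) :
    c ∈ Ioo (k' : ℝ) (k' + ((n : ℝ) - 1)) ↔ k' < k := by
  have hk_real : (k : ℝ) ≤ n := by exact_mod_cast hk
  have hk'_real : (1 : ℝ) ≤ k' := by exact_mod_cast hk'
  constructor
  · rintro ⟨hk'c, -⟩
    exact_mod_cast hk'c.trans hc.2
  · intro hlt
    have hlt_real : (k' : ℝ) + 1 ≤ k := by exact_mod_cast hlt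
    constructor <;> linarith [hc.1, hc.2]

theorem mem_Ioo_add_sub_one_iff_lt (hk : 1 ≤ k) (hk' : k' ≤ n)
    (hc : c ∈ Ioo ((n : ℝ) + k - 1) (n + k)) :
    c ∈ Ioo (k' : ℝ) (k' + ((n : ℝ) - 1)) ↔ k < k' := by
  have hk_real : (1 : ℝ) ≤ k := by exact_mod_cast hk
  have hk'_real : (k' : ℝ) ≤ n := by exact_mod_cast hk'
  constructor
  · rintro ⟨-, hck'⟩
    have : (k : ℝ) < k' := by linarith [hc.1]
    exact_mod_cast this
  · intro hlt
    have hlt_real : (k : ℝ) + 1 ≤ k' := by exact_mod_cast hlt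
    constructor <;> linarith [hc.1, hc.2]

end IntegerSquares

theorem adjacency_gadget_general (n : ℕ) (E : Set (ℕ × ℕ))
    (i j : ℕ) (hi : i ∈ Set.Icc 1 n) (hj : j ∈ Set.Icc 1 n)
    (cm cp dm dp : ℝ)
    (hcm : cm ∈ Set.Ioo ((i : ℝ) - 1) (i : ℝ))
    (hcp : cp ∈ Set.Ioo ((n : ℝ) + i - 1) ((n : ℝ) + i))
    (hdm : dm ∈ Set.Ioo ((j : ℝ) - 1) (j : ℝ))
    (hdp : dp ∈ Set.Ioo ((n : ℝ) + j - 1) ((n : ℝ) + j)) :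
    (∀ i' j' : ℕ, i' ∈ Set.Icc 1 n → j' ∈ Set.Icc 1 n → (i', j') ∉ E →
      ((vLine cm ∪ vLine cp ∪ hLine dm ∪ hLine dp) ∩
        openSquare ((n : ℝ) - 1) (i' : ℝ) (j' : ℝ)).Nonempty) ↔ (i, j) ∈ E := by
  have stabbed_iff_ne : ∀ i' j' : ℕ, i' ∈ Icc 1 n → j' ∈ Icc 1 n →
      (((vLine cm ∪ vLine cp ∪ hLine dm ∪ hLine dp) ∩
        openSquare ((n : ℝ) - 1) (i' : ℝ) (j' : ℝ)).Nonempty ↔ (i', j') ≠ (i, j)) := by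
    rintro i' j' ⟨hi'1, hi'n⟩ ⟨hj'1, hj'n⟩
    rw [four_lines_inter_openSquare_nonempty_iff, mem_Ioo_sub_one_iff_lt hi.2 hi'1 hcm,
      mem_Ioo_add_sub_one_iff_lt hi.1 hi'n hcp, mem_Ioo_sub_one_iff_lt hj.2 hj'1 hdm,
      mem_Ioo_add_sub_one_iff_lt hj.1 hj'n hdp, Ne, Prod.mk.injEq]
    omega
  constructor
  · intro hstab
    by_contra hij
    exact (stabbed_iff_ne i j hi hj).1 (hstab i j hi hj hij) rfl
  · intro hij i' j' hi' hj' hi'j'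
    exact (stabbed_iff_ne i' j' hi' hj').2 fun h => hi'j' (h ▸ hij)

/-- Two antipodal vertical lines representing `i` and two antipodal horizontal lines
representing `j` stab all squares of the adjacency gadget
`A = {□_{n−1}(i', j') : (i', j') ∉ E}` iff `(i, j) ∈ E`. -/
theorem adjacency_gadget (n : ℕ) (hn : 2 ≤ n) (E : Set (ℕ × ℕ))
    (hE : E ⊆ Set.Icc 1 n ×ˢ Set.Icc 1 n)
    (i j : ℕ) (hi : i ∈ Set.Icc 1 n) (hj : j ∈ Set.Icc 1 n)
    (cm cp dm dp : ℝ)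
    (hcm : cm ∈ Set.Ioo ((i : ℝ) - 1) (i : ℝ))
    (hcp : cp ∈ Set.Ioo ((n : ℝ) + i - 1) ((n : ℝ) + i))
    (hdm : dm ∈ Set.Ioo ((j : ℝ) - 1) (j : ℝ))
    (hdp : dp ∈ Set.Ioo ((n : ℝ) + j - 1) ((n : ℝ) + j)) :
    (∀ i' j' : ℕ, i' ∈ Set.Icc 1 n → j' ∈ Set.Icc 1 n → (i', j') ∉ E →
      ((vLine cm ∪ vLine cp ∪ hLine dm ∪ hLine dp) ∩
        openSquare ((n : ℝ) - 1) (i' : ℝ) (j' : ℝ)).Nonempty) ↔ (i, j) ∈ E :=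
  adjacency_gadget_general n E i j hi hj cm cp dm dp hcm hcp hdm hdp
end

section
/- Let N ≥ 1 be an integer, let 0 < u < 1, let x₀, y₀ ∈ ℝ, and consider the N open squares s_i = □_u(x₀ + i, y₀) for i = 1,…,N (squares of side u whose lower-left corners lie at unit horizontal spacing on a common horizontal level). Let ℓ = {(x, y) ∈ ℝ² : a·x + b·y = c} be a line with a ≠ 0. Then ℓ intersects at most ⌈|b/a|⌉ + 1 of the squares s_1,…,s_N. -/
theorem Set.ncard_le_of_forall_lt_add {S : Set ℕ} {n : ℕ}
    (h : ∀ i ∈ S, ∀ j ∈ S, i < j + n) : S.ncard ≤ n := by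
  rcases S.eq_empty_or_nonempty with rfl | hne
  · simp
  have hsub : S ⊆ Finset.Ico (sInf S) (sInf S + n) := fun i hi =>
    Finset.mem_Ico.2 ⟨Nat.sInf_le hi, h i hi _ (Nat.sInf_mem hne)⟩
  calc S.ncard ≤ (Finset.Ico (sInf S) (sInf S + n) : Set ℕ).ncard :=
        Set.ncard_le_ncard hsub (Finset.finite_toSet _)
    _ = n := by rw [Set.ncard_coe_finset, Nat.card_Ico, Nat.add_sub_cancel_left]

lemma fst_sub_fst_eq_of_mem_line {a b c : ℝ} (ha : a ≠ 0) {p q : ℝ × ℝ}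
    (hp : a * p.1 + b * p.2 = c) (hq : a * q.1 + b * q.2 = c) :
    p.1 - q.1 = -(b / a) * (p.2 - q.2) := by
  field_simp
  linarith

lemma abs_fst_sub_fst_le_of_mem_line {a b c : ℝ} (ha : a ≠ 0) {p q : ℝ × ℝ}
    (hp : a * p.1 + b * p.2 = c) (hq : a * q.1 + b * q.2 = c) :
    |p.1 - q.1| ≤ |b / a| * |p.2 - q.2| := by
  rw [fst_sub_fst_eq_of_mem_line ha hp hq, abs_mul, abs_neg]

lemma sub_lt_of_line_meets_openSquare {a b c u x x' y : ℝ} (ha : a ≠ 0) (hu1 : u < 1)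
    (h : ({p : ℝ × ℝ | a * p.1 + b * p.2 = c} ∩ openSquare u x y).Nonempty)
    (h' : ({p : ℝ × ℝ | a * p.1 + b * p.2 = c} ∩ openSquare u x' y).Nonempty) :
    x - x' < |b / a| + 1 := by
  obtain ⟨p, hp, hpx, hpy⟩ := h
  obtain ⟨q, hq, hqx, hqy⟩ := h'
  have hy : |p.2 - q.2| ≤ u :=
    abs_sub_le_iff.2 ⟨by linarith [hpy.2, hqy.1], by linarith [hpy.1, hqy.2]⟩
  calc x - x' < p.1 - q.1 + u := by linarith [hpx.1, hqx.2]
    _ ≤ |b / a| * |p.2 - q.2| + u := by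
        gcongr
        exact (le_abs_self _).trans (abs_fst_sub_fst_le_of_mem_line ha hp hq)
    _ ≤ |b / a| * 1 + 1 := by gcongr; linarith
    _ = |b / a| + 1 := by ring

theorem line_stabs_few_forcing_squares_general (N : ℕ) (u : ℝ)
    (hu1 : u < 1) (x0 y0 a b c : ℝ) (ha : a ≠ 0) :
    {i : ℕ | 1 ≤ i ∧ i ≤ N ∧
        ({p : ℝ × ℝ | a * p.1 + b * p.2 = c} ∩
          openSquare u (x0 + i) y0).Nonempty}.ncard ≤ ⌈|b / a|⌉₊ + 1 := by
  refine Set.ncard_le_of_forall_lt_add fun i ⟨_, _, hi⟩ j ⟨_, _, hj⟩ => ?_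
  have hij : (i : ℝ) - j < ⌈|b / a|⌉₊ + 1 := by
    calc (i : ℝ) - j = (x0 + i) - (x0 + j) := by ring
      _ < |b / a| + 1 := sub_lt_of_line_meets_openSquare ha hu1 hi hj
      _ ≤ ⌈|b / a|⌉₊ + 1 := by gcongr; exact Nat.le_ceil _
  exact_mod_cast (by linarith : (i : ℝ) < j + (⌈|b / a|⌉₊ + 1))

/-- A line `a·x + b·y = c` with `a ≠ 0` intersects at most `⌈|b/a|⌉ + 1` of the `N`
squares `□_u(x₀ + i, y₀)`, `i = 1, …, N`, of side `u < 1` lying at unit horizontal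
spacing on a common horizontal level. -/
theorem line_stabs_few_forcing_squares (N : ℕ) (hN : 1 ≤ N) (u : ℝ)
    (hu0 : 0 < u) (hu1 : u < 1) (x0 y0 a b c : ℝ) (ha : a ≠ 0) :
    {i : ℕ | 1 ≤ i ∧ i ≤ N ∧
        ({p : ℝ × ℝ | a * p.1 + b * p.2 = c} ∩
          openSquare u (x0 + i) y0).Nonempty}.ncard ≤ ⌈|b / a|⌉₊ + 1 :=
  line_stabs_few_forcing_squares_general N u hu1 x0 y0 a b c ha
end

section
/- Let S be a finite family of pairwise disjoint closed axis-parallel unit squares in ℝ², let k ≥ 0, and let T ⊆ S be a subfamily of at least k+1 squares all having the same lower-left x-coordinate. Let T' ⊆ T be any subfamily with exactly k+1 squares. Then S can be stabbed by k axis-parallel lines if and only if (S \ T) ∪ T' can be stabbed by k axis-parallel lines. (The analogous statement holds for squares sharing the same lower-left y-coordinate.) -/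
/-- The closed axis-parallel unit square with lower-left corner `(x, y)`. -/
def closedSquare (x y : ℝ) : Set (ℝ × ℝ) := Set.Icc x (x + 1) ×ˢ Set.Icc y (y + 1)

/-- The family of closed unit squares with corners in `S` can be stabbed by `k`
axis-parallel lines. -/
def StabbableAP (k : ℕ) (S : Finset (ℝ × ℝ)) : Prop :=
  ∃ L : Finset (Set (ℝ × ℝ)), L.card ≤ k ∧ (∀ l ∈ L, IsAPLine l) ∧
    ∀ s ∈ S, ∃ l ∈ L, (l ∩ closedSquare s.1 s.2).Nonempty

/-!
Among `k + 1` squares of one column, `k` lines must stab two with the same line. That line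
is not horizontal, since two disjoint squares of a column cannot both meet a horizontal line
(they would share its point on the column's left edge). So it is a vertical line crossing
the column's `x`-range, and it stabs every square of `T` at once.
-/

open Finset

lemma vLine_inter_closedSquare_nonempty_iff (c x y : ℝ) :
    (vLine c ∩ closedSquare x y).Nonempty ↔ c ∈ Set.Icc x (x + 1) := by
  constructor
  · rintro ⟨p, rfl, hp, -⟩
    exact hp
  · intro hc
    exact ⟨(c, y), rfl, hc, le_rfl, by linarith⟩

lemma hLine_inter_closedSquare_nonempty_iff (c x y : ℝ) :
    (hLine c ∩ closedSquare x y).Nonempty ↔ c ∈ Set.Icc y (y + 1) := by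
  constructor
  · rintro ⟨p, rfl, -, hp⟩
    exact hp
  · intro hc
    exact ⟨(x, c), rfl, ⟨le_rfl, by linarith⟩, hc⟩

lemma inter_closedSquare_nonempty_of_fst_eq {l : Set (ℝ × ℝ)} (hl : IsAPLine l)
    {x0 : ℝ} {s s' t : ℝ × ℝ}
    (hd : Disjoint (closedSquare s.1 s.2) (closedSquare s'.1 s'.2))
    (hs : s.1 = x0) (hs' : s'.1 = x0) (ht : t.1 = x0)
    (hls : (l ∩ closedSquare s.1 s.2).Nonempty) (hls' : (l ∩ closedSquare s'.1 s'.2).Nonempty) :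
    (l ∩ closedSquare t.1 t.2).Nonempty := by
  rcases hl with ⟨c, rfl⟩ | ⟨c, rfl⟩
  · rw [vLine_inter_closedSquare_nonempty_iff] at hls ⊢
    rwa [ht, ← hs]
  · rw [hLine_inter_closedSquare_nonempty_iff] at hls hls'
    have hp : (x0, c) ∈ closedSquare s.1 s.2 := ⟨⟨hs.le, by linarith⟩, hls⟩
    have hp' : (x0, c) ∈ closedSquare s'.1 s'.2 := ⟨⟨hs'.le, by linarith⟩, hls'⟩
    exact (Set.disjoint_left.1 hd hp hp').elim

lemma inter_closedSquare_nonempty_of_snd_eq {l : Set (ℝ × ℝ)} (hl : IsAPLine l)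
    {y0 : ℝ} {s s' t : ℝ × ℝ}
    (hd : Disjoint (closedSquare s.1 s.2) (closedSquare s'.1 s'.2))
    (hs : s.2 = y0) (hs' : s'.2 = y0) (ht : t.2 = y0)
    (hls : (l ∩ closedSquare s.1 s.2).Nonempty) (hls' : (l ∩ closedSquare s'.1 s'.2).Nonempty) :
    (l ∩ closedSquare t.1 t.2).Nonempty := by
  rcases hl with ⟨c, rfl⟩ | ⟨c, rfl⟩
  · rw [vLine_inter_closedSquare_nonempty_iff] at hls hls'
    have hp : (c, y0) ∈ closedSquare s.1 s.2 := ⟨hls, hs.le, by linarith⟩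
    have hp' : (c, y0) ∈ closedSquare s'.1 s'.2 := ⟨hls', hs'.le, by linarith⟩
    exact (Set.disjoint_left.1 hd hp hp').elim
  · rw [hLine_inter_closedSquare_nonempty_iff] at hls ⊢
    rwa [ht, ← hs]

lemma Finset.exists_ne_rel_of_card_lt {α β : Type*} {s : Finset α} {t : Finset β}
    {r : α → β → Prop} (hcard : t.card < s.card) (h : ∀ a ∈ s, ∃ b ∈ t, r a b) :
    ∃ a ∈ s, ∃ a' ∈ s, a ≠ a' ∧ ∃ b ∈ t, r a b ∧ r a' b := by
  obtain ⟨a₀, ha₀⟩ := card_pos.1 (t.card.zero_le.trans_lt hcard)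
  obtain ⟨b₀, -⟩ := h a₀ ha₀
  have : Nonempty β := ⟨b₀⟩
  choose! f hft hf using h
  obtain ⟨a, ha, a', ha', hne, heq⟩ := exists_ne_map_eq_of_card_lt_of_maps_to hcard hft
  exact ⟨a, ha, a', ha', hne, f a, hft a ha, hf a ha, heq ▸ hf a' ha'⟩

lemma StabbableAP.mono {k : ℕ} {S S' : Finset (ℝ × ℝ)} (hS : S' ⊆ S) (h : StabbableAP k S) :
    StabbableAP k S' :=
  let ⟨L, hLk, hLap, hL⟩ := h
  ⟨L, hLk, hLap, fun s hs => hL s (hS hs)⟩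

theorem data_reduction_general (k : ℕ) (S : Finset (ℝ × ℝ))
    (hdisj : ∀ s ∈ S, ∀ s' ∈ S, s ≠ s' →
      Disjoint (closedSquare s.1 s.2) (closedSquare s'.1 s'.2))
    (T T' : Finset (ℝ × ℝ)) (hTS : T ⊆ S) (x0 : ℝ)
    (hsame : (∀ s ∈ T, s.1 = x0) ∨ (∀ s ∈ T, s.2 = x0))
    (hT' : T' ⊆ T) (hT'card : T'.card = k + 1) :
    StabbableAP k S ↔ StabbableAP k ((S \ T) ∪ T') := by
  refine ⟨StabbableAP.mono (union_subset sdiff_subset (hT'.trans hTS)), ?_⟩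
  rintro ⟨L, hLk, hLap, hL⟩
  obtain ⟨s, hs, s', hs', hne, l, hlL, hls, hls'⟩ :=
    exists_ne_rel_of_card_lt (by omega : L.card < T'.card)
      fun t ht => hL t (mem_union_right _ ht)
  have hd := hdisj s (hTS (hT' hs)) s' (hTS (hT' hs')) hne
  have hlT : ∀ t ∈ T, (l ∩ closedSquare t.1 t.2).Nonempty := by
    intro t ht
    rcases hsame with hx | hy
    · exact inter_closedSquare_nonempty_of_fst_eq (hLap l hlL) hd
        (hx s (hT' hs)) (hx s' (hT' hs')) (hx t ht) hls hls'
    · exact inter_closedSquare_nonempty_of_snd_eq (hLap l hlL) hd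
        (hy s (hT' hs)) (hy s' (hT' hs')) (hy t ht) hls hls'
  refine ⟨L, hLk, hLap, fun t ht => ?_⟩
  by_cases htT : t ∈ T
  · exact ⟨l, hlL, hlT t htT⟩
  · exact hL t (mem_union_left _ (mem_sdiff.2 ⟨ht, htT⟩))

/-- Data reduction: if `T ⊆ S` consists of at least `k+1` pairwise disjoint unit squares
all sharing the same lower-left `x`-coordinate (or all sharing the same lower-left
`y`-coordinate) and `T' ⊆ T` has exactly `k+1` squares, then `S` can be stabbed by `k`
axis-parallel lines iff `(S \ T) ∪ T'` can. -/
theorem data_reduction (k : ℕ) (S : Finset (ℝ × ℝ))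
    (hdisj : ∀ s ∈ S, ∀ s' ∈ S, s ≠ s' →
      Disjoint (closedSquare s.1 s.2) (closedSquare s'.1 s'.2))
    (T T' : Finset (ℝ × ℝ)) (hTS : T ⊆ S) (x0 : ℝ)
    (hsame : (∀ s ∈ T, s.1 = x0) ∨ (∀ s ∈ T, s.2 = x0))
    (hTcard : k + 1 ≤ T.card) (hT' : T' ⊆ T) (hT'card : T'.card = k + 1) :
    StabbableAP k S ↔ StabbableAP k ((S \ T) ∪ T') :=
  data_reduction_general k S hdisj T T' hTS x0 hsame hT' hT'card
end

section
/- Let S be a finite family of pairwise disjoint closed axis-parallel unit squares in ℝ², let ℓ be a horizontal line, and let I(ℓ) = {s ∈ S : s ∩ ℓ ≠ ∅}. Suppose |I(ℓ)| > k for some integer k ≥ 0. If L is a set of at most k axis-parallel lines that stabs S, then L contains a horizontal line that intersects at least two squares of I(ℓ). -/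
theorem Finset.exists_ne_of_card_lt_of_forall_exists {α β : Type*} {T : Finset α}
    {L : Finset β} {P : β → α → Prop} (hlt : L.card < T.card)
    (h : ∀ a ∈ T, ∃ b ∈ L, P b a) :
    ∃ a ∈ T, ∃ a' ∈ T, a ≠ a' ∧ ∃ b ∈ L, P b a ∧ P b a' := by
  obtain ⟨a₀, ha₀⟩ := Finset.card_pos.1 (L.card.zero_le.trans_lt hlt)
  have : Nonempty β := ⟨(h a₀ ha₀).choose⟩
  choose! f hfL hfP using h
  obtain ⟨a, ha, a', ha', hne, hfa⟩ := Finset.exists_ne_map_eq_of_card_lt_of_maps_to hlt hfL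
  exact ⟨a, ha, a', ha', hne, f a, hfL a ha, hfP a ha, hfa ▸ hfP a' ha'⟩

theorem mem_prod_of_vLine_inter_nonempty_of_hLine_inter_nonempty {A B : Set ℝ} {c y : ℝ}
    (hv : (vLine c ∩ A ×ˢ B).Nonempty) (hh : (hLine y ∩ A ×ˢ B).Nonempty) :
    (c, y) ∈ A ×ˢ B := by
  obtain ⟨p, rfl : p.1 = c, hpA, -⟩ := hv
  obtain ⟨q, rfl : q.2 = y, -, hqB⟩ := hh
  exact ⟨hpA, hqB⟩

/-- If a horizontal line meets more than `k` of the pairwise disjoint unit squares of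
`S`, then any set of at most `k` axis-parallel lines stabbing `S` contains a horizontal
line meeting at least two of those squares. -/
theorem horizontal_line_needed (S : Finset (ℝ × ℝ))
    (hdisj : ∀ s ∈ S, ∀ s' ∈ S, s ≠ s' →
      Disjoint (closedSquare s.1 s.2) (closedSquare s'.1 s'.2))
    (yl : ℝ) (k : ℕ)
    (hbig : k < {s ∈ (S : Set (ℝ × ℝ)) |
        (hLine yl ∩ closedSquare s.1 s.2).Nonempty}.ncard)
    (L : Finset (Set (ℝ × ℝ))) (hL : ∀ l ∈ L, IsAPLine l) (hcard : L.card ≤ k)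
    (hstab : ∀ s ∈ S, ∃ l ∈ L, (l ∩ closedSquare s.1 s.2).Nonempty) :
    ∃ c : ℝ, hLine c ∈ L ∧ ∃ s ∈ S, ∃ s' ∈ S, s ≠ s' ∧
      (hLine yl ∩ closedSquare s.1 s.2).Nonempty ∧
      (hLine yl ∩ closedSquare s'.1 s'.2).Nonempty ∧
      (hLine c ∩ closedSquare s.1 s.2).Nonempty ∧
      (hLine c ∩ closedSquare s'.1 s'.2).Nonempty := by
  classical
  replace hbig : k < (S.filter fun s ↦ (hLine yl ∩ closedSquare s.1 s.2).Nonempty).card := by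
    rwa [← Set.ncard_coe_finset, Finset.coe_filter]
  obtain ⟨s, hs, s', hs', hne, l, hl, hls, hls'⟩ :=
    Finset.exists_ne_of_card_lt_of_forall_exists (hcard.trans_lt hbig)
      fun s hs ↦ hstab s (Finset.mem_filter.1 hs).1
  rw [Finset.mem_filter] at hs hs'
  rcases hL l hl with ⟨c, rfl⟩ | ⟨c, rfl⟩
  · exact absurd (hdisj s hs.1 s' hs'.1 hne) <| Set.not_disjoint_iff.2
      ⟨(c, yl), mem_prod_of_vLine_inter_nonempty_of_hLine_inter_nonempty hls hs.2,
        mem_prod_of_vLine_inter_nonempty_of_hLine_inter_nonempty hls' hs'.2⟩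
  · exact ⟨c, hl, s, hs.1, s', hs'.1, hne, hs.2, hs'.2, hls, hls'⟩
end

section
/- Let 𝒟 be a finite set of directions in ℝ², let c ≥ 1 and k ≥ 1 be integers, and let S be a finite family of subsets of ℝ² that is c-shallow with respect to 𝒟, i.e., for any two 𝒟-lines ℓ, ℓ' with different directions, at most c members of S are intersected by both ℓ and ℓ'. Let ℓ be a 𝒟-line with |I(ℓ)| > c·k, where I(ℓ) = {s ∈ S : s ∩ ℓ ≠ ∅}. If L is a set of at most k 𝒟-lines that stabs S, then L contains a line parallel to ℓ that intersects at least c+1 members of I(ℓ). -/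
/-!
Pigeonhole: the more than `c·k` members of `I(ℓ)` are each met by one of the at most `k` lines
of `L`, so some line of `L` meets at least `c + 1` of them. By `c`-shallowness that line cannot
have a direction different from that of `ℓ`.
-/

/-- `l` is a line with direction `d`, i.e., a translate of the one-dimensional linear
subspace `d` of the plane. -/
def IsDirLine (d : Submodule ℝ (ℝ × ℝ)) (l : Set (ℝ × ℝ)) : Prop :=
  ∃ p : ℝ × ℝ, l = (fun w => p + w) '' (d : Set (ℝ × ℝ))

theorem Finset.exists_lt_card_filter_of_forall_exists {α β : Type*} (s : Finset α)
    (t : Finset β) (r : α → β → Prop) [∀ b, DecidablePred (r · b)]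
    (hcover : ∀ a ∈ s, ∃ b ∈ t, r a b) (n : ℕ) (hn : t.card * n < s.card) :
    ∃ b ∈ t, n < (s.filter (r · b)).card := by
  classical
  have hsum : s.card ≤ ∑ b ∈ t, (s.filter (r · b)).card := by
    refine (card_le_card fun a ha => ?_).trans card_biUnion_le
    obtain ⟨b, hb, hab⟩ := hcover a ha
    exact mem_biUnion.mpr ⟨b, hb, mem_filter.mpr ⟨ha, hab⟩⟩
  refine exists_lt_of_sum_lt ?_
  rw [sum_const, smul_eq_mul]
  exact hn.trans_le hsum

theorem Finset.ncard_setOf_mem_and {α : Type*} (s : Finset α) (p : α → Prop)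
    [DecidablePred p] : {a | a ∈ (s : Set α) ∧ p a}.ncard = (s.filter p).card := by
  rw [← Set.ncard_coe_finset, coe_filter]
  rfl

theorem shallow_branching_general (𝒟 : Finset (Submodule ℝ (ℝ × ℝ)))
    (c k : ℕ)
    (S : Finset (Set (ℝ × ℝ)))
    (hshallow : ∀ d ∈ 𝒟, ∀ d' ∈ 𝒟, d ≠ d' →
      ∀ l l' : Set (ℝ × ℝ), IsDirLine d l → IsDirLine d' l' →
        {s ∈ (S : Set (Set (ℝ × ℝ))) |
          (s ∩ l).Nonempty ∧ (s ∩ l').Nonempty}.ncard ≤ c)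
    (d : Submodule ℝ (ℝ × ℝ)) (hd : d ∈ 𝒟)
    (ℓ : Set (ℝ × ℝ)) (hℓ : IsDirLine d ℓ)
    (hbig : c * k < {s ∈ (S : Set (Set (ℝ × ℝ))) | (s ∩ ℓ).Nonempty}.ncard)
    (L : Finset (Set (ℝ × ℝ))) (hLcard : L.card ≤ k)
    (hL : ∀ l ∈ L, ∃ d' ∈ 𝒟, IsDirLine d' l)
    (hstab : ∀ s ∈ S, ∃ l ∈ L, (s ∩ l).Nonempty) :
    ∃ l ∈ L, IsDirLine d l ∧
      c + 1 ≤ {s ∈ (S : Set (Set (ℝ × ℝ))) |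
        (s ∩ ℓ).Nonempty ∧ (s ∩ l).Nonempty}.ncard := by
  classical
  set I := S.filter fun s => (s ∩ ℓ).Nonempty
  have hI : L.card * c < I.card := by
    rw [Finset.ncard_setOf_mem_and] at hbig
    exact (Nat.mul_le_mul_right c hLcard).trans_lt (mul_comm k c ▸ hbig)
  have hcover : ∀ s ∈ I, ∃ l ∈ L, (s ∩ l).Nonempty := fun s hs =>
    hstab s (Finset.mem_filter.mp hs).1
  obtain ⟨l, hlL, hl⟩ := I.exists_lt_card_filter_of_forall_exists L _ hcover c hI
  have hcount : c + 1 ≤ {s ∈ (S : Set (Set (ℝ × ℝ))) |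
      (s ∩ ℓ).Nonempty ∧ (s ∩ l).Nonempty}.ncard := by
    rwa [Finset.ncard_setOf_mem_and, ← Finset.filter_filter]
  obtain ⟨d', hd', hl'⟩ := hL l hlL
  obtain rfl : d' = d := by
    by_contra hne
    have := hshallow d hd d' hd' (Ne.symm hne) ℓ l hℓ hl'
    omega
  exact ⟨l, hlL, hl', hcount⟩

/-- If `S` is `c`-shallow with respect to a finite set `𝒟` of directions and some
`𝒟`-line `ℓ` meets more than `c·k` members of `S`, then any set of at most `k`
`𝒟`-lines stabbing `S` contains a line parallel to `ℓ` meeting at least `c+1`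
members of `I(ℓ)`. -/
theorem shallow_branching (𝒟 : Finset (Submodule ℝ (ℝ × ℝ)))
    (h𝒟 : ∀ d ∈ 𝒟, Module.finrank ℝ d = 1)
    (c k : ℕ) (hc : 1 ≤ c) (hk : 1 ≤ k)
    (S : Finset (Set (ℝ × ℝ)))
    (hshallow : ∀ d ∈ 𝒟, ∀ d' ∈ 𝒟, d ≠ d' →
      ∀ l l' : Set (ℝ × ℝ), IsDirLine d l → IsDirLine d' l' →
        {s ∈ (S : Set (Set (ℝ × ℝ))) |
          (s ∩ l).Nonempty ∧ (s ∩ l').Nonempty}.ncard ≤ c)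
    (d : Submodule ℝ (ℝ × ℝ)) (hd : d ∈ 𝒟)
    (ℓ : Set (ℝ × ℝ)) (hℓ : IsDirLine d ℓ)
    (hbig : c * k < {s ∈ (S : Set (Set (ℝ × ℝ))) | (s ∩ ℓ).Nonempty}.ncard)
    (L : Finset (Set (ℝ × ℝ))) (hLcard : L.card ≤ k)
    (hL : ∀ l ∈ L, ∃ d' ∈ 𝒟, IsDirLine d' l)
    (hstab : ∀ s ∈ S, ∃ l ∈ L, (s ∩ l).Nonempty) :
    ∃ l ∈ L, IsDirLine d l ∧
      c + 1 ≤ {s ∈ (S : Set (Set (ℝ × ℝ))) |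
        (s ∩ ℓ).Nonempty ∧ (s ∩ l).Nonempty}.ncard :=
  shallow_branching_general 𝒟 c k S hshallow d hd ℓ hℓ hbig L hLcard hL hstab
end
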